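/- Let Σ̂ be an n×n real symmetric positive definite matrix and δ ∈ ℝ. Let λ > 0 and let Γ, Θ be n×n real symmetric matrices with Γ ⪰ 0, I + Γ − ofd(Θ) ⪰ 0, and Σ̂⁻¹ + λ⁻¹(ofd(Θ) − Γ) ≻ 0, and set Λ := I + Γ − ofd(Θ). Define the Lagrangian 𝓛(L,Σ) := tr(L) + λ(−log det Σ + log det Σ̂ − n + tr(Σ̂⁻¹Σ) − δ) − tr(ΛL) − tr(Γ(Σ−L)) + tr(ofd(Θ)(Σ−L)). Then the infimum of 𝓛(L,Σ) over all symmetric L and all symmetric positive definite Σ equals J(λ,Γ,Θ) := λ( log det(Σ̂⁻¹ + λ⁻¹(ofd(Θ) − Γ)) + log det Σ̂ − δ ), and this infimum is attained at Σ = λ(λΣ̂⁻¹ − Γ + ofd(Θ))⁻¹ (with arbitrary L). -/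

import Mathlib

/-!
The `L`-terms of the Lagrangian cancel because `Λ = I + Γ − ofd Θ`, and what remains is
`λ (tr(AΣ) − log det Σ − n + log det Ŝ − δ)` with `A := Ŝ⁻¹ + λ⁻¹(ofd Θ − Γ) ≻ 0`.
The eigenvalues `μᵢ > 0` of `Σ^{1/2} A Σ^{1/2}` satisfy `μᵢ − log μᵢ ≥ 1`, so summing gives
`tr(AΣ) − log det Σ ≥ n + log det A`, with equality at `Σ = A⁻¹ = λ(λŜ⁻¹ − Γ + ofd Θ)⁻¹`.
-/

/-- `dd M`: the diagonal matrix with the same diagonal as `M`. -/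
def dd {n : ℕ} (M : Matrix (Fin n) (Fin n) ℝ) : Matrix (Fin n) (Fin n) ℝ :=
  Matrix.diagonal fun i => M i i

/-- `ofd M := M − dd M`: `M` with its diagonal entries set to zero. -/
def ofd {n : ℕ} (M : Matrix (Fin n) (Fin n) ℝ) : Matrix (Fin n) (Fin n) ℝ :=
  M - dd M

/-- The Lagrangian `𝓛(L,Σ)` with multipliers `λ, Γ, Θ` and `Λ := I + Γ − ofd(Θ)`. -/
noncomputable def lagr {n : ℕ} (S : Matrix (Fin n) (Fin n) ℝ) (δ l : ℝ)
    (Γ Θ L X : Matrix (Fin n) (Fin n) ℝ) : ℝ :=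
  L.trace + l * (-Real.log X.det + Real.log S.det - n + (S⁻¹ * X).trace - δ)
    - ((1 + Γ - ofd Θ) * L).trace - (Γ * (X - L)).trace + (ofd Θ * (X - L)).trace

namespace Matrix

variable {ι : Type*} [Fintype ι] [DecidableEq ι]

theorem PosDef.card_add_log_det_le_trace {B : Matrix ι ι ℝ} (hB : B.PosDef) :
    Fintype.card ι + Real.log B.det ≤ B.trace := by
  have hμ := hB.eigenvalues_pos
  rw [hB.isHermitian.trace_eq_sum_eigenvalues, hB.isHermitian.det_eq_prod_eigenvalues]
  simp only [RCLike.ofReal_real_eq_id, id]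
  rw [Real.log_prod fun i _ => (hμ i).ne']
  calc (Fintype.card ι : ℝ) + ∑ i, Real.log (hB.1.eigenvalues i)
      = ∑ i, (1 + Real.log (hB.1.eigenvalues i)) := by
        simp [Finset.sum_add_distrib]
    _ ≤ ∑ i, hB.1.eigenvalues i :=
        Finset.sum_le_sum fun i _ => by linarith [Real.log_le_sub_one_of_pos (hμ i)]

open scoped MatrixOrder in
theorem PosDef.log_det_le_trace_mul_sub_log_det {A X : Matrix ι ι ℝ} (hA : A.PosDef)
    (hX : X.PosDef) :
    Real.log A.det ≤ (A * X).trace - Real.log X.det - Fintype.card ι := by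
  set Q := CFC.sqrt X
  have hQQ : Q * Q = X := CFC.sqrt_mul_sqrt_self X hX.posSemidef.nonneg
  have hQ : Q.IsHermitian := (nonneg_iff_posSemidef.mp (CFC.sqrt_nonneg X)).1
  have hdet : (Q * A * Q).det = A.det * X.det := by
    rw [det_mul, det_mul, ← hQQ, det_mul]; ring
  have hB : (Q * A * Q).PosDef := by
    have hpsd := hA.posSemidef.mul_mul_conjTranspose_same Q
    rw [hQ.eq] at hpsd
    exact hpsd.posDef_iff_det_ne_zero.mpr (hdet ▸ (mul_pos hA.det_pos hX.det_pos).ne')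
  have hcard := hB.card_add_log_det_le_trace
  rw [hdet, Real.log_mul hA.det_pos.ne' hX.det_pos.ne', trace_mul_cycle, hQQ,
    trace_mul_comm] at hcard
  linarith

theorem PosDef.trace_mul_inv_sub_log_det_inv {A : Matrix ι ι ℝ} (hA : A.PosDef) :
    (A * A⁻¹).trace - Real.log A⁻¹.det - Fintype.card ι = Real.log A.det := by
  rw [mul_nonsing_inv _ (isUnit_iff_ne_zero.mpr hA.det_pos.ne'), trace_one, det_nonsing_inv,
    Ring.inverse_eq_inv, Real.log_inv]
  ring

end Matrix

open Matrix

theorem lagr_eq {n : ℕ} (S : Matrix (Fin n) (Fin n) ℝ) (δ : ℝ) {l : ℝ} (hl : l ≠ 0)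
    (Γ Θ L X : Matrix (Fin n) (Fin n) ℝ) :
    lagr S δ l Γ Θ L X =
      l * (((S⁻¹ + l⁻¹ • (ofd Θ - Γ)) * X).trace - Real.log X.det - n
        + Real.log S.det - δ) := by
  unfold lagr
  simp only [add_mul, sub_mul, mul_sub, one_mul, smul_mul, trace_add, trace_sub, trace_smul,
    smul_eq_mul]
  field_simp
  ring

theorem smul_inv_smul_sub_add_ofd {n : ℕ} (S Γ Θ : Matrix (Fin n) (Fin n) ℝ) {l : ℝ}
    (hl : l ≠ 0) (hdet : IsUnit (S⁻¹ + l⁻¹ • (ofd Θ - Γ)).det) :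
    l • (l • S⁻¹ - Γ + ofd Θ)⁻¹ = (S⁻¹ + l⁻¹ • (ofd Θ - Γ))⁻¹ := by
  have : Invertible l := invertibleOfNonzero hl
  have hfactor : l • S⁻¹ - Γ + ofd Θ = l • (S⁻¹ + l⁻¹ • (ofd Θ - Γ)) := by
    rw [smul_add, smul_smul, mul_inv_cancel₀ hl, one_smul]
    abel
  rw [hfactor, inv_smul _ _ hdet, smul_smul, invOf_eq_inv, mul_inv_cancel₀ hl, one_smul]

theorem stmt5 {n : ℕ} (S : Matrix (Fin n) (Fin n) ℝ) (δ : ℝ)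
    (l : ℝ) (hl : 0 < l) (Γ Θ : Matrix (Fin n) (Fin n) ℝ)
    (hpd : (S⁻¹ + l⁻¹ • (ofd Θ - Γ)).PosDef) :
    (l • (l • S⁻¹ - Γ + ofd Θ)⁻¹ : Matrix (Fin n) (Fin n) ℝ).PosDef ∧
    (∀ L X : Matrix (Fin n) (Fin n) ℝ, L.IsSymm → X.PosDef →
      lagr S δ l Γ Θ L X ≥
        l * (Real.log ((S⁻¹ + l⁻¹ • (ofd Θ - Γ)).det) + Real.log S.det - δ)) ∧
    (∀ L : Matrix (Fin n) (Fin n) ℝ, L.IsSymm →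
      lagr S δ l Γ Θ L (l • (l • S⁻¹ - Γ + ofd Θ)⁻¹) =
        l * (Real.log ((S⁻¹ + l⁻¹ • (ofd Θ - Γ)).det) + Real.log S.det - δ)) := by
  have hsol := smul_inv_smul_sub_add_ofd S Γ Θ hl.ne' (isUnit_iff_ne_zero.mpr hpd.det_pos.ne')
  refine ⟨hsol ▸ hpd.inv, fun L X _ hX => ?_, fun L _ => ?_⟩
  · rw [lagr_eq S δ hl.ne', ge_iff_le]
    have hlower := hpd.log_det_le_trace_mul_sub_log_det hX
    rw [Fintype.card_fin] at hlower
    exact mul_le_mul_of_nonneg_left (by linarith) hl.le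
  · have hattained := hpd.trace_mul_inv_sub_log_det_inv
    rw [Fintype.card_fin] at hattained
    rw [hsol, lagr_eq S δ hl.ne', ← hattained]
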